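/- For θ > 0, let σ_θ(t) = exp(−θ/(1−t²)) on (−1,1), extended by 0 outside, C_θ = (∫_{−1}^{1} σ_θ)^{−1}, and for ω > 0 define H_{ω,θ}(z) = C_θ ∫_{−1}^{1} σ_θ(t) e^{−iωtz} dt. Then for every real x, H_{ω,θ}(ix) ≥ exp(ω|x|/(2√(θ+1))) / (11√(θ+1)). -/

import Mathlib

/-!
Evaluated at `z = i x`, `H_{ω,θ}` is the real Laplace transform `C_θ ∫ σ_θ(t) e^{ωxt} dt`, and
since `σ_θ` is even we may replace `ωx` by `|ωx|`. With `s = √(θ+1)`, on `[1/(2s), 1/s]` we have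
`θ/(1-t²) ≤ θ+1`, so the integrand is at least `e^{-(θ+1)} e^{|ωx|/(2s)}` there, which bounds the
integral below by `e^{-(θ+1)} e^{|ωx|/(2s)}/(2s)`. On the other hand `σ_θ ≤ e^{-θ}` gives
`C_θ ≥ e^θ/2`, and the product of the two bounds is `e^{|ωx|/(2s)}/(4e s)`, with `4e < 11`.
-/

/-- The bump function `σ_θ(t) = exp(-θ/(1-t²))` on `(-1,1)`, extended by `0`. -/
noncomputable def sigmaBump (θ t : ℝ) : ℝ :=
  if t ∈ Set.Ioo (-1 : ℝ) 1 then Real.exp (-θ / (1 - t ^ 2)) else 0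

/-- The normalizing constant `C_θ = (∫_{-1}^1 σ_θ)⁻¹`. -/
noncomputable def bumpConst (θ : ℝ) : ℝ := (∫ t in (-1 : ℝ)..1, sigmaBump θ t)⁻¹

/-- The entire function `H_{ω,θ}(z) = C_θ ∫_{-1}^1 σ_θ(t) e^{-iωtz} dt`. -/
noncomputable def Hfun (ω θ : ℝ) (z : ℂ) : ℂ :=
  (bumpConst θ : ℂ) * ∫ t in (-1 : ℝ)..1, (sigmaBump θ t : ℂ) * Complex.exp (-Complex.I * ω * t * z)

open MeasureTheory Real Set

lemma sigmaBump_nonneg (θ t : ℝ) : 0 ≤ sigmaBump θ t := by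
  unfold sigmaBump
  split_ifs <;> positivity

lemma sigmaBump_pos {θ t : ℝ} (ht : t ∈ Ioo (-1 : ℝ) 1) : 0 < sigmaBump θ t := by
  rw [sigmaBump, if_pos ht]
  exact exp_pos _

lemma sigmaBump_neg (θ t : ℝ) : sigmaBump θ (-t) = sigmaBump θ t := by
  have hmem : -t ∈ Ioo (-1 : ℝ) 1 ↔ t ∈ Ioo (-1 : ℝ) 1 := by
    simp only [mem_Ioo]
    constructor <;> rintro ⟨h1, h2⟩ <;> constructor <;> linarith
  simp only [sigmaBump, hmem, neg_sq]

lemma measurable_sigmaBump (θ : ℝ) : Measurable (sigmaBump θ) :=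
  Measurable.ite measurableSet_Ioo (by fun_prop) measurable_const

lemma sigmaBump_le_exp_neg {θ : ℝ} (hθ : 0 ≤ θ) (t : ℝ) : sigmaBump θ t ≤ exp (-θ) := by
  unfold sigmaBump
  split_ifs with ht
  · obtain ⟨h1, h2⟩ := ht
    have hpos : 0 < 1 - t ^ 2 := by nlinarith
    exact exp_le_exp.mpr (by rw [neg_div, neg_le_neg_iff, le_div_iff₀ hpos]; nlinarith)
  · positivity

lemma exp_neg_add_one_le_sigmaBump {θ t : ℝ} (hθ : 0 < θ) (ht : (θ + 1) * t ^ 2 ≤ 1) :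
    exp (-(θ + 1)) ≤ sigmaBump θ t := by
  have hpos : 0 < 1 - t ^ 2 := by nlinarith
  have hmem : t ∈ Ioo (-1 : ℝ) 1 := ⟨by nlinarith, by nlinarith⟩
  rw [sigmaBump, if_pos hmem]
  exact exp_le_exp.mpr (by rw [neg_div, neg_le_neg_iff, div_le_iff₀ hpos]; nlinarith)

lemma intervalIntegrable_sigmaBump {θ : ℝ} (hθ : 0 ≤ θ) (a b : ℝ) :
    IntervalIntegrable (sigmaBump θ) volume a b := by
  refine (intervalIntegrable_const (c := exp (-θ))).mono_fun
    (measurable_sigmaBump θ).aestronglyMeasurable (ae_of_all _ fun t => ?_)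
  dsimp only
  rw [norm_of_nonneg (sigmaBump_nonneg θ t), norm_of_nonneg (exp_pos _).le]
  exact sigmaBump_le_exp_neg hθ t

lemma intervalIntegrable_sigmaBump_mul_exp {θ : ℝ} (hθ : 0 ≤ θ) (c a b : ℝ) :
    IntervalIntegrable (fun t => sigmaBump θ t * exp (c * t)) volume a b :=
  (intervalIntegrable_sigmaBump hθ a b).mul_continuousOn (by fun_prop)

lemma integral_sigmaBump_pos {θ : ℝ} (hθ : 0 ≤ θ) : 0 < ∫ t in (-1 : ℝ)..1, sigmaBump θ t :=
  intervalIntegral.intervalIntegral_pos_of_pos_on (intervalIntegrable_sigmaBump hθ _ _)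
    (fun _ ht => sigmaBump_pos ht) (by norm_num)

lemma integral_sigmaBump_le {θ : ℝ} (hθ : 0 ≤ θ) :
    ∫ t in (-1 : ℝ)..1, sigmaBump θ t ≤ 2 * exp (-θ) := by
  have h := intervalIntegral.integral_mono_on (by norm_num : (-1 : ℝ) ≤ 1)
    (intervalIntegrable_sigmaBump hθ _ _) intervalIntegrable_const
    (fun t _ => sigmaBump_le_exp_neg hθ t)
  rwa [intervalIntegral.integral_const, smul_eq_mul, show (1 : ℝ) - -1 = 2 by norm_num] at h

lemma exp_div_two_le_bumpConst {θ : ℝ} (hθ : 0 ≤ θ) : exp θ / 2 ≤ bumpConst θ :=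
  calc exp θ / 2 = (2 * exp (-θ))⁻¹ := by rw [exp_neg]; field_simp
    _ ≤ bumpConst θ := inv_anti₀ (integral_sigmaBump_pos hθ) (integral_sigmaBump_le hθ)

lemma integral_sigmaBump_mul_exp_neg (θ c : ℝ) :
    ∫ t in (-1 : ℝ)..1, sigmaBump θ t * exp (-c * t) =
      ∫ t in (-1 : ℝ)..1, sigmaBump θ t * exp (c * t) := by
  simpa [sigmaBump_neg] using
    intervalIntegral.integral_comp_neg (a := -1) (b := 1) fun t => sigmaBump θ t * exp (c * t)

lemma integral_sigmaBump_mul_exp_abs (θ c : ℝ) :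
    ∫ t in (-1 : ℝ)..1, sigmaBump θ t * exp (|c| * t) =
      ∫ t in (-1 : ℝ)..1, sigmaBump θ t * exp (c * t) := by
  rcases abs_choice c with h | h <;> rw [h]
  exact integral_sigmaBump_mul_exp_neg θ c

lemma mul_exp_le_integral_sigmaBump_mul_exp {θ c a : ℝ} (hθ : 0 < θ) (hc : 0 ≤ c) (ha : 0 < a)
    (haθ : (θ + 1) * (2 * a) ^ 2 ≤ 1) :
    a * (exp (-(θ + 1)) * exp (c * a)) ≤ ∫ t in (-1 : ℝ)..1, sigmaBump θ t * exp (c * t) := by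
  have hint := intervalIntegrable_sigmaBump_mul_exp hθ.le c
  have h2a : 2 * a ≤ 1 := by nlinarith
  have hlower : ∀ t ∈ Icc a (2 * a),
      exp (-(θ + 1)) * exp (c * a) ≤ sigmaBump θ t * exp (c * t) := by
    rintro t ⟨hat, hta⟩
    have ht : (θ + 1) * t ^ 2 ≤ 1 := by nlinarith [pow_le_pow_left₀ (by linarith) hta 2]
    exact mul_le_mul (exp_neg_add_one_le_sigmaBump hθ ht) (exp_le_exp.mpr (by gcongr))
      (exp_pos _).le (sigmaBump_nonneg θ t)
  calc a * (exp (-(θ + 1)) * exp (c * a))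
      = ∫ _ in a..2 * a, exp (-(θ + 1)) * exp (c * a) := by
        rw [intervalIntegral.integral_const, smul_eq_mul]; ring
    _ ≤ ∫ t in a..2 * a, sigmaBump θ t * exp (c * t) :=
        intervalIntegral.integral_mono_on (by linarith) intervalIntegrable_const (hint _ _) hlower
    _ ≤ ∫ t in (-1 : ℝ)..1, sigmaBump θ t * exp (c * t) :=
        intervalIntegral.integral_mono_interval (by linarith) (by linarith) h2a
          (ae_of_all _ fun t => mul_nonneg (sigmaBump_nonneg θ t) (exp_pos _).le) (hint _ _)

lemma Hfun_I_mul_re (ω θ x : ℝ) :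
    (Hfun ω θ (Complex.I * x)).re =
      bumpConst θ * ∫ t in (-1 : ℝ)..1, sigmaBump θ t * exp (ω * x * t) := by
  have hintegrand : ∀ t : ℝ,
      (sigmaBump θ t : ℂ) * Complex.exp (-Complex.I * ω * t * (Complex.I * x)) =
        ((sigmaBump θ t * exp (ω * x * t) : ℝ) : ℂ) := by
    intro t
    have harg : -Complex.I * ω * t * (Complex.I * x) = ((ω * x * t : ℝ) : ℂ) := by
      push_cast
      linear_combination (-(ω : ℂ) * x * t) * Complex.I_mul_I
    rw [harg, ← Complex.ofReal_exp, ← Complex.ofReal_mul]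
  simp only [Hfun, hintegrand]
  rw [intervalIntegral.integral_ofReal, ← Complex.ofReal_mul, Complex.ofReal_re]

/-- For every real `x`, `H_{ω,θ}(ix) ≥ exp(ω|x|/(2√(θ+1)))/(11√(θ+1))`. -/
theorem Hfun_lower_bound (ω θ : ℝ) (hω : 0 < ω) (hθ : 0 < θ) (x : ℝ) :
    Real.exp (ω * |x| / (2 * Real.sqrt (θ + 1))) / (11 * Real.sqrt (θ + 1)) ≤
      (Hfun ω θ (Complex.I * x)).re := by
  set s := sqrt (θ + 1)
  have hs : 0 < s := sqrt_pos.mpr (by linarith)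
  have hss : s ^ 2 = θ + 1 := sq_sqrt (by linarith)
  have hC := exp_div_two_le_bumpConst hθ.le
  have hI := mul_exp_le_integral_sigmaBump_mul_exp (c := |ω * x|) (a := 1 / (2 * s)) hθ
    (abs_nonneg _) (by positivity) (by field_simp; rw [hss])
  have he : 4 * exp 1 ≤ 11 := by linarith [exp_one_lt_d9]
  rw [Hfun_I_mul_re, ← integral_sigmaBump_mul_exp_abs]
  calc exp (ω * |x| / (2 * s)) / (11 * s)
      ≤ exp (ω * |x| / (2 * s)) / (4 * exp 1 * s) := by gcongr
    _ = exp θ / 2 * (1 / (2 * s) * (exp (-(θ + 1)) * exp (|ω * x| * (1 / (2 * s))))) := by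
        rw [abs_mul, abs_of_pos hω, show -(θ + 1) = -θ + -1 by ring, exp_add, exp_neg, exp_neg]
        field_simp
        norm_num
    _ ≤ bumpConst θ * ∫ t in (-1 : ℝ)..1, sigmaBump θ t * exp (|ω * x| * t) :=
        mul_le_mul hC hI (by positivity) ((by positivity : (0 : ℝ) ≤ exp θ / 2).trans hC)
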